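/- Let f ∈ S_{p,μ}, α ≥ β > 0 and δ > 0. If the derivative f^{(β)} exists and belongs to S_{p,μ}, then ω_α(f,δ)_{p,μ} ≤ δ^β · ω_{α−β}(f^{(β)},δ)_{p,μ} (with the convention ω_0(g,δ)_{p,μ} = ‖g‖_{p,μ} when α = β). -/

import Mathlib

open MeasureTheory Filter Topology Asymptotics

noncomputable section

/-- The `k`-th Fourier coefficient of a (2π-periodic) function `f : ℝ → ℂ`:
`f̂(k) = (2π)⁻¹ ∫_0^{2π} f(t) e^{-ikt} dt`. -/
def fcoeff (f : ℝ → ℂ) (k : ℤ) : ℂ :=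
  (1 / (2 * (Real.pi : ℂ))) *
    ∫ t in (0:ℝ)..(2 * Real.pi), f t * Complex.exp (-(Complex.I * (k : ℂ) * (t : ℂ)))

/-- The admissible set defining the Luxemburg norm:
`{a > 0 : Σ_k μ_k |f̂(k)/a|^{p_k} ≤ 1}` (with the sum required to converge). -/
def lpSet (p μ : ℤ → ℝ) (f : ℝ → ℂ) : Set ℝ :=
  {a : ℝ | 0 < a ∧
    Summable (fun k : ℤ => μ k * (‖fcoeff f k‖ / a) ^ (p k)) ∧
    ∑' k : ℤ, μ k * (‖fcoeff f k‖ / a) ^ (p k) ≤ 1}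

/-- The Luxemburg norm `‖f‖_{p,μ}`. -/
def luxNorm (p μ : ℤ → ℝ) (f : ℝ → ℂ) : ℝ := sInf (lpSet p μ f)

/-- Membership in the space `S_{p,μ}`: `f` is 2π-periodic, integrable on a period, and
has finite Luxemburg norm (i.e. the admissible set is nonempty). -/
def MemS (p μ : ℤ → ℝ) (f : ℝ → ℂ) : Prop :=
  Function.Periodic f (2 * Real.pi) ∧ IntervalIntegrable f volume 0 (2 * Real.pi) ∧
    (lpSet p μ f).Nonempty

/-- Generalized binomial coefficient `binom(α,j) = α(α−1)⋯(α−j+1)/j!`. -/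
def gbinom (α : ℝ) (j : ℕ) : ℝ :=
  (∏ i ∈ Finset.range j, (α - (i : ℝ))) / (j.factorial : ℝ)

/-- Fractional difference `Δ_h^α f(x) = Σ_{j=0}^∞ (−1)^j binom(α,j) f(x − jh)`. -/
def fracDiff (α h : ℝ) (f : ℝ → ℂ) (x : ℝ) : ℂ :=
  ∑' j : ℕ, (-1 : ℂ) ^ j * (gbinom α j : ℂ) * f (x - (j : ℝ) * h)

/-- Modulus of smoothness `ω_α(f,δ)_{p,μ} = sup_{|h| ≤ δ} ‖Δ_h^α f‖_{p,μ}`. -/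
def modulus (p μ : ℤ → ℝ) (α : ℝ) (f : ℝ → ℂ) (δ : ℝ) : ℝ :=
  ⨆ h : {h : ℝ // |h| ≤ δ}, luxNorm p μ (fracDiff α h.1 f)

/-- Trigonometric polynomial of degree at most `n - 1` with coefficients `c`:
`Σ_{|k| ≤ n-1} c_k e^{ikx}`. -/
def trigSum (c : ℤ → ℂ) (n : ℕ) (x : ℝ) : ℂ :=
  ∑ k ∈ Finset.Ioo (-(n : ℤ)) (n : ℤ), c k * Complex.exp (Complex.I * (k : ℂ) * (x : ℂ))

/-- Best approximation `E_n(f)_{p,μ}` of `f` by trigonometric polynomials of degree `≤ n-1`. -/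
def bestApprox (p μ : ℤ → ℝ) (n : ℕ) (f : ℝ → ℂ) : ℝ :=
  sInf {r : ℝ | ∃ c : ℤ → ℂ, r = luxNorm p μ (fun x => f x - trigSum c n x)}

/-- `g` is the ψ-derivative of `f`: `ĝ(k) = f̂(k)/ψ_k` for `k ≠ 0` (and `ĝ(0) = 0`),
with `g` 2π-periodic and integrable on a period. -/
def IsPsiDeriv (ψ : ℤ → ℂ) (f g : ℝ → ℂ) : Prop :=
  Function.Periodic g (2 * Real.pi) ∧ IntervalIntegrable g volume 0 (2 * Real.pi) ∧
    fcoeff g 0 = 0 ∧ ∀ k : ℤ, k ≠ 0 → fcoeff g k = fcoeff f k / ψ k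

/-- Trigonometric polynomial of degree at most `n`: `τ_n(x) = Σ_{|k| ≤ n} c_k e^{ikx}`. -/
def trigPoly (c : ℤ → ℂ) (n : ℕ) (x : ℝ) : ℂ :=
  ∑ k ∈ Finset.Icc (-(n : ℤ)) (n : ℤ), c k * Complex.exp (Complex.I * (k : ℂ) * (x : ℂ))

/-- ψ-derivative of the trigonometric polynomial with coefficients `c`:
`τ_n^ψ(x) = Σ_{0<|k|≤n} (c_k/ψ_k) e^{ikx}`. -/
def trigPolyPsi (ψ : ℤ → ℂ) (c : ℤ → ℂ) (n : ℕ) (x : ℝ) : ℂ :=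
  ∑ k ∈ Finset.Icc (-(n : ℤ)) (n : ℤ),
    (if k = 0 then 0 else c k / ψ k) * Complex.exp (Complex.I * (k : ℂ) * (x : ℂ))

/-!
The Fourier coefficients of `Δ_h^γ F` are those of `F` multiplied by the binomial series
`Σ_j binom(γ,j) z^j` at `z = -e^{-ikh}`. Since `Σ_j |binom(γ,j)| < ∞` for `γ ≥ 0`, this series
is continuous on the closed unit disc, where it sums to `(1 + z)^γ` inside; so its modulus is
`|1 - e^{-ikh}|^γ`. Splitting this multiplier for `γ = α` as the product of the ones for `β` and
`α - β`, and using `|1 - e^{-ikh}| ≤ |k| |h|` against `f̂(k) = |k|^{-β} ĝ(k)`, bounds each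
coefficient of `Δ_h^α f` by `|h|^β` times that of `Δ_h^{α-β} g`. The Luxemburg norm is monotone
under such coefficientwise domination.
-/

open Finset Metric

theorem gbinom_eq_choose (γ : ℝ) (n : ℕ) : gbinom γ n = Ring.choose γ n := by
  rw [Ring.choose_eq_smul, gbinom, ← descPochhammer_eval_eq_prod_range, smul_eq_mul,
    div_eq_inv_mul, ← Polynomial.aeval_eq_smeval]
  simp [Polynomial.aeval_def, Polynomial.eval₂_eq_eval_map, descPochhammer_map]

theorem gbinom_succ (γ : ℝ) (j : ℕ) :
    gbinom γ (j + 1) = gbinom γ j * ((γ - j) / (j + 1)) := by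
  simp only [gbinom, prod_range_succ, Nat.factorial_succ, Nat.cast_mul, Nat.cast_add,
    Nat.cast_one, div_mul_div_comm]
  ring

theorem gbinom_natCast_of_lt {m j : ℕ} (h : m < j) : gbinom m j = 0 := by
  rw [gbinom, prod_eq_zero (mem_range.mpr h) (sub_self _), zero_div]

theorem summable_abs_gbinom {γ : ℝ} (hγ : 0 ≤ γ) : Summable fun j ↦ |gbinom γ j| := by
  rcases hγ.eq_or_lt with rfl | hγ
  · refine summable_of_ne_finset_zero (s := {0}) fun j hj ↦ ?_
    simpa using gbinom_natCast_of_lt (m := 0) (Nat.pos_of_ne_zero (by simpa using hj))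
  obtain ⟨N, hN⟩ := exists_nat_gt γ
  set u : ℕ → ℝ := fun j ↦ ((N + j : ℕ) : ℝ) * |gbinom γ (N + j)|
  -- Beyond `N` the ratio `|b (j+1)| / |b j| = (j - γ) / (j + 1)` telescopes.
  have telescope : ∀ j, γ * |gbinom γ (N + j)| = u j - u (j + 1) := by
    intro j
    have hj : γ ≤ (N + j : ℕ) := by push_cast; linarith [(j.cast_nonneg : (0:ℝ) ≤ j)]
    simp only [u, ← add_assoc, gbinom_succ, abs_mul, abs_div, abs_of_nonpos (sub_nonpos.mpr hj),
      abs_of_pos (by positivity : (0:ℝ) < (N + j : ℕ) + 1)]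
    push_cast
    field_simp
    ring
  have bound : ∀ n, ∑ j ∈ range n, |gbinom γ (N + j)| ≤ u 0 / γ := by
    intro n
    rw [le_div_iff₀ hγ, sum_mul]
    simp_rw [mul_comm _ γ, telescope, sum_range_sub']
    have : 0 ≤ u n := by positivity
    linarith
  refine (summable_nat_add_iff N).mp ?_
  simpa [add_comm] using summable_of_sum_range_le (fun _ ↦ abs_nonneg _) bound

def binomSeries (γ : ℝ) (z : ℂ) : ℂ := ∑' j : ℕ, (gbinom γ j : ℂ) * z ^ j

theorem hasSum_binomSeries {γ : ℝ} {z : ℂ} (hz : ‖z‖ < 1) :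
    HasSum (fun j ↦ (gbinom γ j : ℂ) * z ^ j) ((1 + z) ^ (γ : ℂ)) := by
  have hmem : z ∈ eball (0 : ℂ) 1 := by
    rwa [mem_eball_zero_iff, ← ofReal_norm, ENNReal.ofReal_lt_one]
  simpa [binomialSeries, FormalMultilinearSeries.coeff_ofScalars, gbinom_eq_choose,
    Complex.ofReal_choose, mul_comm] using
    (Complex.one_add_cpow_hasFPowerSeriesOnBall_zero (a := γ)).hasSum hmem

theorem norm_gbinom_mul_pow_le {γ : ℝ} {z : ℂ} (hz : ‖z‖ ≤ 1) (j : ℕ) :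
    ‖(gbinom γ j : ℂ) * z ^ j‖ ≤ |gbinom γ j| := by
  rw [norm_mul, norm_pow, Complex.norm_real, Real.norm_eq_abs]
  exact mul_le_of_le_one_right (abs_nonneg _) (pow_le_one₀ (norm_nonneg z) hz)

theorem continuousOn_binomSeries {γ : ℝ} (hγ : 0 ≤ γ) :
    ContinuousOn (binomSeries γ) (closedBall 0 1) :=
  continuousOn_tsum (fun _ ↦ by fun_prop) (summable_abs_gbinom hγ)
    fun j z hz ↦ norm_gbinom_mul_pow_le (mem_closedBall_zero_iff.mp hz) j

theorem norm_binomSeries {γ : ℝ} (hγ : 0 ≤ γ) {z : ℂ} (hz : ‖z‖ ≤ 1) :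
    ‖binomSeries γ z‖ = ‖1 + z‖ ^ γ := by
  have hball : Set.EqOn (fun z ↦ ‖binomSeries γ z‖) (fun z ↦ ‖1 + z‖ ^ γ) (ball 0 1) := by
    intro z hz
    dsimp only
    rw [binomSeries, (hasSum_binomSeries (mem_ball_zero_iff.mp hz)).tsum_eq,
      Complex.norm_cpow_real]
  refine hball.of_subset_closure (continuousOn_binomSeries hγ).norm ?_ ball_subset_closedBall
    (closure_ball (0 : ℂ) one_ne_zero).ge (mem_closedBall_zero_iff.mpr hz)
  exact ((Real.continuous_rpow_const hγ).comp (continuous_norm.comp (continuous_const.add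
    continuous_id))).continuousOn

section Fourier

variable {F : ℝ → ℂ}

theorem fcoeff_comp_sub (hF : Function.Periodic F (2 * Real.pi)) (k : ℤ) (c : ℝ) :
    fcoeff (fun x ↦ F (x - c)) k = Complex.exp (-(Complex.I * k * c)) * fcoeff F k := by
  set P : ℝ → ℂ := fun t ↦ F t * Complex.exp (-(Complex.I * k * t))
  have hP : Function.Periodic P (2 * Real.pi) := fun t ↦ by
    simp only [P, hF t, Complex.ofReal_add, mul_add, neg_add, Complex.exp_add]
    rw [show -(Complex.I * k * (2 * Real.pi : ℝ)) = (-k : ℤ) * (2 * Real.pi * Complex.I) by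
      push_cast; ring, Complex.exp_int_mul_two_pi_mul_I, mul_one]
  have hshift : ∀ t : ℝ, F (t - c) * Complex.exp (-(Complex.I * k * t)) =
      Complex.exp (-(Complex.I * k * c)) * P (t - c) := fun t ↦ by
    simp only [P, ← mul_assoc, mul_comm _ (F _), mul_assoc (F _), ← Complex.exp_add]
    push_cast; ring_nf
  simp only [fcoeff, hshift, intervalIntegral.integral_const_mul,
    intervalIntegral.integral_comp_sub_right P c]
  rw [zero_sub, show 2 * Real.pi - c = -c + 2 * Real.pi by ring, hP.intervalIntegral_add_eq (-c) 0,
    zero_add]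
  ring

theorem integral_norm_comp_sub (hF : Function.Periodic F (2 * Real.pi)) (c : ℝ) :
    ∫ t in (0:ℝ)..(2 * Real.pi), ‖F (t - c)‖ = ∫ t in (0:ℝ)..(2 * Real.pi), ‖F t‖ := by
  have hnorm : Function.Periodic (fun t ↦ ‖F t‖) (2 * Real.pi) := fun t ↦ by simp [hF t]
  rw [intervalIntegral.integral_comp_sub_right (fun t ↦ ‖F t‖), zero_sub,
    show 2 * Real.pi - c = -c + 2 * Real.pi by ring, hnorm.intervalIntegral_add_eq (-c) 0, zero_add]

theorem fcoeff_tsum {G : ℕ → ℝ → ℂ}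
    (hG : ∀ j, IntervalIntegrable (G j) volume 0 (2 * Real.pi))
    (hsum : Summable fun j ↦ ∫ t in (0:ℝ)..(2 * Real.pi), ‖G j t‖) (k : ℤ) :
    fcoeff (fun x ↦ ∑' j, G j x) k = ∑' j, fcoeff (G j) k := by
  have h2π : (0:ℝ) ≤ 2 * Real.pi := by positivity
  simp only [fcoeff, intervalIntegral.integral_of_le h2π, ← tsum_mul_right]
  rw [← integral_tsum_of_summable_integral_norm, tsum_mul_left]
  · exact fun j ↦ ((hG j).mul_continuousOn (by fun_prop)).def' |>.mono_set (by simp [h2π])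
  · simpa [Complex.norm_exp, intervalIntegral.integral_of_le h2π] using hsum

theorem fcoeff_const_mul (a : ℂ) (k : ℤ) : fcoeff (fun x ↦ a * F x) k = a * fcoeff F k := by
  simp only [fcoeff, mul_assoc, intervalIntegral.integral_const_mul]
  ring

theorem fcoeff_fracDiff {γ : ℝ} (hγ : 0 ≤ γ) (hF : Function.Periodic F (2 * Real.pi))
    (hFi : IntervalIntegrable F volume 0 (2 * Real.pi)) (h : ℝ) (k : ℤ) :
    fcoeff (fracDiff γ h F) k =
      binomSeries γ (-Complex.exp (-(Complex.I * k * h))) * fcoeff F k := by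
  have hshift : ∀ c, IntervalIntegrable (fun t ↦ F (t - c)) volume 0 (2 * Real.pi) := fun c ↦ by
    simpa using (hF.intervalIntegrable Real.two_pi_pos.ne' (t := 0) (by rwa [zero_add]) (0 - c)
      (2 * Real.pi - c)).comp_sub_right c
  have hsum : Summable fun j : ℕ ↦
      ∫ t in (0:ℝ)..(2 * Real.pi), ‖(-1 : ℂ) ^ j * (gbinom γ j : ℂ) * F (t - j * h)‖ := by
    simpa [intervalIntegral.integral_const_mul, integral_norm_comp_sub hF] using
      (summable_abs_gbinom hγ).mul_right (∫ t in (0:ℝ)..(2 * Real.pi), ‖F t‖)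
  unfold fracDiff
  rw [fcoeff_tsum (fun j ↦ (hshift _).const_mul _) hsum, binomSeries, ← tsum_mul_right]
  congr 1 with j
  rw [fcoeff_const_mul, fcoeff_comp_sub hF, neg_pow (Complex.exp _), ← Complex.exp_nat_mul]
  push_cast
  ring_nf

theorem norm_fcoeff_fracDiff {γ : ℝ} (hγ : 0 ≤ γ) (hF : Function.Periodic F (2 * Real.pi))
    (hFi : IntervalIntegrable F volume 0 (2 * Real.pi)) (h : ℝ) (k : ℤ) :
    ‖fcoeff (fracDiff γ h F) k‖ =
      ‖1 - Complex.exp (-(Complex.I * k * h))‖ ^ γ * ‖fcoeff F k‖ := by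
  rw [fcoeff_fracDiff hγ hF hFi, norm_mul, norm_binomSeries hγ (by simp [Complex.norm_exp]),
    ← sub_eq_add_neg]

end Fourier

theorem norm_one_sub_exp_le (k : ℤ) (h : ℝ) :
    ‖1 - Complex.exp (-(Complex.I * k * h))‖ ≤ |(k : ℝ)| * |h| :=
  calc ‖1 - Complex.exp (-(Complex.I * k * h))‖
      = ‖Complex.exp (Complex.I * (-(k * h) : ℝ)) - 1‖ := by
        rw [norm_sub_rev]; push_cast; ring_nf
    _ ≤ ‖-(k * h)‖ := Real.norm_exp_I_mul_ofReal_sub_one_le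
    _ = |(k : ℝ)| * |h| := by rw [norm_neg, Real.norm_eq_abs, abs_mul]

theorem norm_one_sub_exp_le_two (k : ℤ) (h : ℝ) :
    ‖1 - Complex.exp (-(Complex.I * k * h))‖ ≤ 2 := by
  refine (norm_sub_le _ _).trans ?_
  norm_num [Complex.norm_exp]

section Luxemburg

variable {p μ : ℤ → ℝ} {F G : ℝ → ℂ} {c : ℝ}

theorem mul_mem_lpSet_of_norm_fcoeff_le (hp : ∀ k, 0 ≤ p k) (hμ : ∀ k, 0 ≤ μ k) (hc : 0 < c)
    (hFG : ∀ k, ‖fcoeff F k‖ ≤ c * ‖fcoeff G k‖) {a : ℝ} (ha : a ∈ lpSet p μ G) :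
    c * a ∈ lpSet p μ F := by
  obtain ⟨ha, hsum, hle⟩ := ha
  have hterm : ∀ k, μ k * (‖fcoeff F k‖ / (c * a)) ^ p k ≤ μ k * (‖fcoeff G k‖ / a) ^ p k := by
    intro k
    refine mul_le_mul_of_nonneg_left (Real.rpow_le_rpow (by positivity) ?_ (hp k)) (hμ k)
    calc ‖fcoeff F k‖ / (c * a) ≤ c * ‖fcoeff G k‖ / (c * a) := by gcongr; exact hFG k
      _ = ‖fcoeff G k‖ / a := mul_div_mul_left _ _ hc.ne'
  have hsum' : Summable fun k ↦ μ k * (‖fcoeff F k‖ / (c * a)) ^ p k :=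
    hsum.of_nonneg_of_le (fun k ↦ mul_nonneg (hμ k) (by positivity)) hterm
  exact ⟨by positivity, hsum', (hsum'.tsum_le_tsum hterm hsum).trans hle⟩

theorem luxNorm_le_of_norm_fcoeff_le (hp : ∀ k, 0 ≤ p k) (hμ : ∀ k, 0 ≤ μ k) (hc : 0 < c)
    (hFG : ∀ k, ‖fcoeff F k‖ ≤ c * ‖fcoeff G k‖) (hG : (lpSet p μ G).Nonempty) :
    luxNorm p μ F ≤ c * luxNorm p μ G := by
  rw [luxNorm, luxNorm, ← div_le_iff₀' hc]
  refine le_csInf hG fun a ha ↦ ?_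
  rw [div_le_iff₀' hc]
  exact csInf_le ⟨0, fun _ hx ↦ hx.1.le⟩ (mul_mem_lpSet_of_norm_fcoeff_le hp hμ hc hFG ha)

end Luxemburg

section FracDiff

variable {p μ : ℤ → ℝ} {F : ℝ → ℂ} {γ : ℝ}

theorem norm_fcoeff_fracDiff_le (hγ : 0 ≤ γ) (hF : Function.Periodic F (2 * Real.pi))
    (hFi : IntervalIntegrable F volume 0 (2 * Real.pi)) (h : ℝ) (k : ℤ) :
    ‖fcoeff (fracDiff γ h F) k‖ ≤ 2 ^ γ * ‖fcoeff F k‖ := by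
  rw [norm_fcoeff_fracDiff hγ hF hFi]
  gcongr
  exact norm_one_sub_exp_le_two k h

theorem lpSet_fracDiff_nonempty (hp : ∀ k, 0 ≤ p k) (hμ : ∀ k, 0 ≤ μ k) (hγ : 0 ≤ γ)
    (hF : MemS p μ F) (h : ℝ) : (lpSet p μ (fracDiff γ h F)).Nonempty :=
  let ⟨_, ha⟩ := hF.2.2
  ⟨_, mul_mem_lpSet_of_norm_fcoeff_le hp hμ (by positivity)
    (norm_fcoeff_fracDiff_le hγ hF.1 hF.2.1 h) ha⟩

theorem luxNorm_fracDiff_le_modulus (hp : ∀ k, 0 ≤ p k) (hμ : ∀ k, 0 ≤ μ k) (hγ : 0 ≤ γ)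
    (hF : MemS p μ F) {δ h : ℝ} (hh : |h| ≤ δ) :
    luxNorm p μ (fracDiff γ h F) ≤ modulus p μ γ F δ := by
  refine le_ciSup (f := fun h : {h : ℝ // |h| ≤ δ} ↦ luxNorm p μ (fracDiff γ h.1 F))
    ⟨2 ^ γ * luxNorm p μ F, ?_⟩ ⟨h, hh⟩
  rintro _ ⟨h, rfl⟩
  exact luxNorm_le_of_norm_fcoeff_le hp hμ (by positivity)
    (norm_fcoeff_fracDiff_le hγ hF.1 hF.2.1 h) hF.2.2

end FracDiff

theorem norm_fcoeff_fracDiff_le_of_isPsiDeriv {f g : ℝ → ℂ} {α β δ h : ℝ}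
    (hf : Function.Periodic f (2 * Real.pi)) (hfi : IntervalIntegrable f volume 0 (2 * Real.pi))
    (hg : IsPsiDeriv (fun k : ℤ => ((|(k : ℝ)| ^ (-β) : ℝ) : ℂ)) f g)
    (hβ : 0 < β) (hβα : β ≤ α) (hh : |h| ≤ δ) (k : ℤ) :
    ‖fcoeff (fracDiff α h f) k‖ ≤ δ ^ β * ‖fcoeff (fracDiff (α - β) h g) k‖ := by
  obtain ⟨hgp, hgi, -, hgk⟩ := hg
  have hα : 0 < α := hβ.trans_le hβα
  have hαβ : 0 ≤ α - β := sub_nonneg.mpr hβα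
  have hδ : 0 ≤ δ := (abs_nonneg h).trans hh
  rw [norm_fcoeff_fracDiff hα.le hf hfi, norm_fcoeff_fracDiff hαβ hgp hgi]
  set m := ‖1 - Complex.exp (-(Complex.I * k * h))‖
  rcases eq_or_ne k 0 with rfl | hk
  · simp only [m, Int.cast_zero, mul_zero, zero_mul, neg_zero, Complex.exp_zero, sub_self,
      norm_zero, Real.zero_rpow hα.ne']
    positivity
  have hk' : 0 < |(k : ℝ)| := by positivity
  have hfk : ‖fcoeff f k‖ = |(k : ℝ)| ^ (-β) * ‖fcoeff g k‖ := by
    rw [hgk k hk, norm_div, Complex.norm_real, Real.norm_of_nonneg (by positivity),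
      mul_div_cancel₀ _ (by positivity)]
  have hsymbol : m ^ β * |(k : ℝ)| ^ (-β) ≤ δ ^ β := by
    rw [Real.rpow_neg hk'.le, ← div_eq_mul_inv, ← Real.div_rpow (norm_nonneg _) hk'.le]
    refine Real.rpow_le_rpow (by positivity) ((div_le_iff₀' hk').mpr ?_) hβ.le
    exact (norm_one_sub_exp_le k h).trans (by gcongr)
  have hsplit : m ^ α = m ^ β * m ^ (α - β) := by
    rw [← Real.rpow_add' (norm_nonneg _) (by linarith), add_sub_cancel]
  calc m ^ α * ‖fcoeff f k‖
      = (m ^ β * |(k : ℝ)| ^ (-β)) * (m ^ (α - β) * ‖fcoeff g k‖) := by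
        rw [hfk, hsplit]
        ring
    _ ≤ δ ^ β * (m ^ (α - β) * ‖fcoeff g k‖) := by gcongr

/-- if `f^{(β)} = g ∈ S_{p,μ}` exists (ψ-derivative with `ψ_k = |k|^{−β}`),
then `ω_α(f,δ)_{p,μ} ≤ δ^β ω_{α−β}(f^{(β)},δ)_{p,μ}`. -/
theorem stmt_5 (K : ℝ) (p μ : ℤ → ℝ) (hp : ∀ k : ℤ, 1 ≤ p k ∧ p k ≤ K)
    (hμ : ∀ k : ℤ, 0 ≤ μ k) (f : ℝ → ℂ) (hf : MemS p μ f)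
    (α β : ℝ) (hβ : 0 < β) (hβα : β ≤ α) (δ : ℝ) (hδ : 0 < δ)
    (g : ℝ → ℂ) (hg : IsPsiDeriv (fun k : ℤ => ((|(k : ℝ)| ^ (-β) : ℝ) : ℂ)) f g)
    (hgS : MemS p μ g) :
    modulus p μ α f δ ≤ δ ^ β * modulus p μ (α - β) g δ := by
  have hp0 : ∀ k, 0 ≤ p k := fun k ↦ zero_le_one.trans (hp k).1
  have hαβ : 0 ≤ α - β := sub_nonneg.mpr hβα
  have : Nonempty {h : ℝ // |h| ≤ δ} := ⟨⟨0, by simpa using hδ.le⟩⟩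
  refine ciSup_le fun ⟨h, hh⟩ ↦ ?_
  calc luxNorm p μ (fracDiff α h f)
      ≤ δ ^ β * luxNorm p μ (fracDiff (α - β) h g) :=
        luxNorm_le_of_norm_fcoeff_le hp0 hμ (by positivity)
          (norm_fcoeff_fracDiff_le_of_isPsiDeriv hf.1 hf.2.1 hg hβ hβα hh)
          (lpSet_fracDiff_nonempty hp0 hμ hαβ hgS h)
    _ ≤ δ ^ β * modulus p μ (α - β) g δ := by
        gcongr
        exact luxNorm_fracDiff_le_modulus hp0 hμ hαβ hgS hh
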